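/- arXiv:2109.11676 — 3 statements merged into one kernel-verified Lean document; each statement's English description precedes it below -/
import Mathlib

section
/- Let H̃₁, …, H̃_M be Hermitian d×d matrices, |ψ⟩ ∈ ℂ^d a unit vector, and extend |ψ⟩ to an orthonormal basis {|m⟩} of ℂ^d with |ψ⟩ among the basis vectors. Define vectors R_m, I_m ∈ ℝ^M by R_m(j) = Re⟨m|H̃_j|ψ⟩ and I_m(j) = Im⟨m|H̃_j|ψ⟩. Then the matrix F with F_jk = 4 Re[⟨ψ|H̃_j H̃_k|ψ⟩ - ⟨ψ|H̃_j|ψ⟩⟨ψ|H̃_k|ψ⟩] equals 4 Σ_{m : |m⟩ ≠ |ψ⟩} (R_m R_mᵀ + I_m I_mᵀ). In particular, rank(F) ≤ 2d - 2. -/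
/-!
Writing `cᵢ(H) = ⟨bᵢ|H|ψ⟩` for the coordinates of `H|ψ⟩` in the orthonormal basis `{bᵢ}`,
hermiticity gives `⟨ψ|H K|ψ⟩ = ⟨H ψ|K ψ⟩`, and Parseval's identity expands this as
`∑ᵢ conj(cᵢ(H)) cᵢ(K)`. The term of the basis vector `ψ` itself is `⟨ψ|H|ψ⟩⟨ψ|K|ψ⟩`
(the expectation of a Hermitian matrix is real), so the covariance is the sum over the other
`d - 1` basis vectors, and the real part of each term is `Rᵢ(j) Rᵢ(k) + Iᵢ(j) Iᵢ(k)`.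
A sum of `2(d - 1)` rank-one matrices has rank at most `2d - 2`.
-/

open Matrix Finset

namespace Matrix

section Rank

variable {m n ι K : Type*} [Fintype n] [Field K]

theorem rank_add_le (A B : Matrix m n K) : (A + B).rank ≤ A.rank + B.rank := by
  rw [rank, rank, rank, mulVecLin_add]
  exact (Submodule.finrank_mono (LinearMap.range_add_le _ _)).trans
    (Submodule.finrank_add_le_finrank_add_finrank _ _)

theorem rank_finsetSum_le (s : Finset ι) (A : ι → Matrix m n K) :
    (∑ i ∈ s, A i).rank ≤ ∑ i ∈ s, (A i).rank :=
  Finset.sum_hom_rel (r := fun A k => rank A ≤ k) (by simp) fun _ _ _ h =>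
    (rank_add_le _ _).trans (by gcongr)

theorem rank_sum_vecMulVec_add_vecMulVec_le (s : Finset ι) (u u' : ι → m → K)
    (v v' : ι → n → K) :
    (∑ i ∈ s, (vecMulVec (u i) (v i) + vecMulVec (u' i) (v' i))).rank ≤ 2 * #s := by
  refine (rank_finsetSum_le _ _).trans ?_
  rw [mul_comm, ← smul_eq_mul, ← sum_const]
  refine sum_le_sum fun i _ => (rank_add_le _ _).trans ?_
  linarith [rank_vecMulVec_le (u i) (v i), rank_vecMulVec_le (u' i) (v' i)]

end Rank

section StarRing

variable {n R : Type*} [Fintype n] [CommRing R] [StarRing R]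

theorem IsHermitian.star_dotProduct_mul_mulVec {H : Matrix n n R} (hH : H.IsHermitian)
    (K : Matrix n n R) (x y : n → R) :
    star x ⬝ᵥ (H * K) *ᵥ y = star (H *ᵥ x) ⬝ᵥ K *ᵥ y := by
  rw [← mulVec_mulVec, dotProduct_mulVec, star_mulVec, hH.eq]

theorem IsHermitian.isSelfAdjoint_star_dotProduct_mulVec_self {H : Matrix n n R}
    (hH : H.IsHermitian) (x : n → R) : IsSelfAdjoint (star x ⬝ᵥ H *ᵥ x) := by
  rw [IsSelfAdjoint, ← star_dotProduct, star_mulVec, ← dotProduct_mulVec, hH.eq]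

variable [DecidableEq n]

theorem sum_star_dotProduct_mul_dotProduct_of_orthonormal {b : n → n → R}
    (hb : ∀ i j, star (b i) ⬝ᵥ b j = if i = j then 1 else 0) (v w : n → R) :
    ∑ i, star (star (b i) ⬝ᵥ v) * (star (b i) ⬝ᵥ w) = star v ⬝ᵥ w := by
  -- Orthonormal rows make `C` unitary, so `Cᴴ * C = 1` as well: this is completeness.
  set C : Matrix n n R := of fun i => star (b i)
  have hC : C * Cᴴ = 1 := by
    ext i j
    simpa [C, mul_apply, one_apply, dotProduct] using hb i j
  calc ∑ i, star (star (b i) ⬝ᵥ v) * (star (b i) ⬝ᵥ w)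
      = star (C *ᵥ v) ⬝ᵥ C *ᵥ w := rfl
    _ = star v ⬝ᵥ (Cᴴ * C) *ᵥ w := by rw [star_mulVec, ← dotProduct_mulVec, mulVec_mulVec]
    _ = star v ⬝ᵥ w := by rw [mul_eq_one_comm.mp hC, one_mulVec]

theorem IsHermitian.star_dotProduct_mul_mulVec_sub_eq_sum_erase {H : Matrix n n R}
    (hH : H.IsHermitian) (K : Matrix n n R) {b : n → n → R}
    (hb : ∀ i j, star (b i) ⬝ᵥ b j = if i = j then 1 else 0) (i₀ : n) :
    star (b i₀) ⬝ᵥ (H * K) *ᵥ b i₀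
        - (star (b i₀) ⬝ᵥ H *ᵥ b i₀) * (star (b i₀) ⬝ᵥ K *ᵥ b i₀)
      = ∑ i ∈ univ.erase i₀, star (star (b i) ⬝ᵥ H *ᵥ b i₀) * (star (b i) ⬝ᵥ K *ᵥ b i₀) := by
  rw [hH.star_dotProduct_mul_mulVec, ← sum_star_dotProduct_mul_dotProduct_of_orthonormal hb,
    ← add_sum_erase _ _ (mem_univ i₀),
    (hH.isSelfAdjoint_star_dotProduct_mulVec_self (b i₀)).star_eq, add_sub_cancel_left]

end StarRing

end Matrix

theorem stmt_9_general {d M : ℕ} (Ht : Fin M → Matrix (Fin d) (Fin d) ℂ)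
    (hH : ∀ j, (Ht j).IsHermitian)
    (ψ : Fin d → ℂ)
    (b : Fin d → Fin d → ℂ)
    (hON : ∀ m n, dotProduct (star (b m)) (b n) = if m = n then 1 else 0)
    (m0 : Fin d) (hb0 : b m0 = ψ)
    (R I' : Fin d → Fin M → ℝ)
    (hR : ∀ m j, R m j = (dotProduct (star (b m)) ((Ht j).mulVec ψ)).re)
    (hI : ∀ m j, I' m j = (dotProduct (star (b m)) ((Ht j).mulVec ψ)).im)
    (F : Matrix (Fin M) (Fin M) ℝ)
    (hF : ∀ j k, F j k =
      4 * (dotProduct (star ψ) ((Ht j * Ht k).mulVec ψ)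
            - dotProduct (star ψ) ((Ht j).mulVec ψ)
              * dotProduct (star ψ) ((Ht k).mulVec ψ)).re) :
    F = (4 : ℝ) • ∑ m ∈ Finset.univ.erase m0,
          (Matrix.vecMulVec (R m) (R m) + Matrix.vecMulVec (I' m) (I' m))
    ∧ F.rank ≤ 2 * d - 2 := by
  subst hb0
  have hentry : ∀ j k, F j k = 4 * ∑ m ∈ univ.erase m0, (R m j * R m k + I' m j * I' m k) := by
    intro j k
    rw [hF, (hH j).star_dotProduct_mul_mulVec_sub_eq_sum_erase _ hON, Complex.re_sum]
    simp [hR, hI, Complex.mul_re]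
  have hdecomp : F = (4 : ℝ) • ∑ m ∈ univ.erase m0,
      (vecMulVec (R m) (R m) + vecMulVec (I' m) (I' m)) := by
    ext j k
    simp [hentry, Matrix.sum_apply, vecMulVec_apply]
  refine ⟨hdecomp, ?_⟩
  rw [hdecomp, rank_smul_of_mem_nonZeroDivisors _ (mem_nonZeroDivisors_of_ne_zero four_ne_zero)]
  calc _ ≤ 2 * #(univ.erase m0) := rank_sum_vecMulVec_add_vecMulVec_le _ _ _ _ _
    _ = 2 * d - 2 := by rw [card_erase_of_mem (mem_univ _), card_univ, Fintype.card_fin]; omega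

/-- Rank-one decomposition of the QFIM: with an orthonormal basis `{|m⟩}` containing `|ψ⟩`,
`F = 4 ∑_{m ≠ ψ} (R_m R_mᵀ + I_m I_mᵀ)`, and hence `rank F ≤ 2d - 2`. -/
theorem stmt_9 {d M : ℕ} (Ht : Fin M → Matrix (Fin d) (Fin d) ℂ)
    (hH : ∀ j, (Ht j).IsHermitian)
    (ψ : Fin d → ℂ) (hψ : dotProduct (star ψ) ψ = 1)
    (b : Fin d → Fin d → ℂ)
    (hON : ∀ m n, dotProduct (star (b m)) (b n) = if m = n then 1 else 0)
    (m0 : Fin d) (hb0 : b m0 = ψ)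
    (R I' : Fin d → Fin M → ℝ)
    (hR : ∀ m j, R m j = (dotProduct (star (b m)) ((Ht j).mulVec ψ)).re)
    (hI : ∀ m j, I' m j = (dotProduct (star (b m)) ((Ht j).mulVec ψ)).im)
    (F : Matrix (Fin M) (Fin M) ℝ)
    (hF : ∀ j k, F j k =
      4 * (dotProduct (star ψ) ((Ht j * Ht k).mulVec ψ)
            - dotProduct (star ψ) ((Ht j).mulVec ψ)
              * dotProduct (star ψ) ((Ht k).mulVec ψ)).re) :
    F = (4 : ℝ) • ∑ m ∈ Finset.univ.erase m0,
          (Matrix.vecMulVec (R m) (R m) + Matrix.vecMulVec (I' m) (I' m))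
    ∧ F.rank ≤ 2 * d - 2 :=
  stmt_9_general Ht hH ψ b hON m0 hb0 R I' hR hI F hF
end

section
/- Let H̃₁, …, H̃_M be Hermitian d×d matrices such that each iH̃_j lies in a real subspace 𝔤 of anti-Hermitian matrices of real dimension D. Then for any unit vector |ψ⟩ ∈ ℂ^d, the quantum Fisher information matrix F with entries F_jk = 4 Re[⟨ψ|H̃_j H̃_k|ψ⟩ - ⟨ψ|H̃_j|ψ⟩⟨ψ|H̃_k|ψ⟩] has rank at most D. -/
/-! Row `j` of the QFIM is a real-linear functional of `i H̃_k ∈ 𝔤`, so the linear map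
`v ↦ F v` factors through `𝔤` and its rank is at most `dim 𝔤`. -/

open Matrix

theorem Matrix.rank_le_finrank_of_forall_eq_apply {K V ι κ : Type*} [Field K] [AddCommGroup V]
    [Module K V] [Fintype ι] [Fintype κ] (F : Matrix ι κ K) (p : Submodule K V)
    [FiniteDimensional K p] (L : ι → V →ₗ[K] K) (x : κ → p)
    (hF : ∀ j k, F j k = L j (x k)) : F.rank ≤ Module.finrank K p := by
  let Φ : p →ₗ[K] ι → K := LinearMap.pi fun j => L j ∘ₗ p.subtype
  have hfactor : F.mulVecLin = Φ ∘ₗ Fintype.linearCombination K x := by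
    ext v j
    simp [Φ, Fintype.linearCombination_apply, mulVec, dotProduct, hF, mul_comm]
  calc F.rank = Module.finrank K (LinearMap.range F.mulVecLin) := rfl
    _ ≤ Module.finrank K (LinearMap.range Φ) :=
      Submodule.finrank_mono (hfactor ▸ LinearMap.range_comp_le_range _ _)
    _ ≤ Module.finrank K p := Φ.finrank_range_le

section Covariance

variable {n R : Type*} [Fintype n] [CommRing R] [Star R]

def Matrix.covariance (ψ : n → R) (H : Matrix n n R) : Matrix n n R →ₗ[R] R where
  toFun A := star ψ ⬝ᵥ (H * A) *ᵥ ψ - (star ψ ⬝ᵥ H *ᵥ ψ) * (star ψ ⬝ᵥ A *ᵥ ψ)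
  map_add' A B := by
    simp only [Matrix.mul_add, add_mulVec, dotProduct_add]
    ring
  map_smul' c A := by
    simp only [Matrix.mul_smul, smul_mulVec, dotProduct_smul, smul_eq_mul, RingHom.id_apply]
    ring

end Covariance

/-- Row `j` of the QFIM as a real-linear functional of `A = i H̃_k`, whence the factor `-i`. -/
noncomputable def qfimRow {n : Type*} [Fintype n] (ψ : n → ℂ) (H : Matrix n n ℂ) :
    Matrix n n ℂ →ₗ[ℝ] ℝ :=
  (4 : ℝ) • Complex.reLm ∘ₗ ((-Complex.I) • covariance ψ H).restrictScalars ℝ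

theorem qfimRow_apply_I_smul {n : Type*} [Fintype n] (ψ : n → ℂ) (H K : Matrix n n ℂ) :
    qfimRow ψ H (Complex.I • K) = 4 * (covariance ψ H K).re := by
  simp [qfimRow, ← mul_assoc]

theorem stmt_10_general {d M D : ℕ} (Ht : Fin M → Matrix (Fin d) (Fin d) ℂ)
    (g : Submodule ℝ (Matrix (Fin d) (Fin d) ℂ))
    (hdim : Module.finrank ℝ g = D)
    (hHg : ∀ j, Complex.I • Ht j ∈ g)
    (ψ : Fin d → ℂ)
    (F : Matrix (Fin M) (Fin M) ℝ)
    (hF : ∀ j k, F j k =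
      4 * (dotProduct (star ψ) ((Ht j * Ht k).mulVec ψ)
            - dotProduct (star ψ) ((Ht j).mulVec ψ)
              * dotProduct (star ψ) ((Ht k).mulVec ψ)).re) :
    F.rank ≤ D := by
  have hrow : ∀ j k, F j k = qfimRow ψ (Ht j) (⟨Complex.I • Ht k, hHg k⟩ : g) := fun j k => by
    rw [hF, qfimRow_apply_I_smul]
    rfl
  exact hdim ▸ F.rank_le_finrank_of_forall_eq_apply g (fun j => qfimRow ψ (Ht j)) _ hrow

/-- Theorem 1: if each `i H̃_j` lies in a real subspace `𝔤` of anti-Hermitian matrices of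
real dimension `D`, then the QFIM has rank at most `D`. -/
theorem stmt_10 {d M D : ℕ} (Ht : Fin M → Matrix (Fin d) (Fin d) ℂ)
    (hHerm : ∀ j, (Ht j).IsHermitian)
    (g : Submodule ℝ (Matrix (Fin d) (Fin d) ℂ))
    (hanti : ∀ A ∈ g, Aᴴ = -A)
    (hdim : Module.finrank ℝ g = D)
    (hHg : ∀ j, Complex.I • Ht j ∈ g)
    (ψ : Fin d → ℂ) (hψ : dotProduct (star ψ) ψ = 1)
    (F : Matrix (Fin M) (Fin M) ℝ)
    (hF : ∀ j k, F j k =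
      4 * (dotProduct (star ψ) ((Ht j * Ht k).mulVec ψ)
            - dotProduct (star ψ) ((Ht j).mulVec ψ)
              * dotProduct (star ψ) ((Ht k).mulVec ψ)).re) :
    F.rank ≤ D :=
  stmt_10_general Ht g hdim hHg ψ F hF
end

section
/- Let H̃₁, …, H̃_M be Hermitian d×d matrices and define the M×M real symmetric matrix H with entries H_ij = -(2/d)[ d · Re Tr[H̃_i H̃_j] + Re(Tr[H̃_i] Tr[H̃_j]) ]. If each iH̃_j lies in a real subspace 𝔤 of anti-Hermitian matrices of real dimension D, then rank(H) ≤ D. -/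
/-!
Every column of `H` is the image of `i H̃_j ∈ 𝔤` under one fixed real-linear map
`B ↦ (hessianForm d (H̃_i) (-i B))_i`, so the column space of `H` lies in the image of `𝔤`,
whose dimension is at most `D`.
-/

open Matrix

theorem Matrix.rank_le_finrank_of_col_mem {K ι κ : Type*} [Field K] [Fintype ι] [Fintype κ]
    (A : Matrix ι κ K) (S : Submodule K (ι → K)) (hS : ∀ j, A.col j ∈ S) :
    A.rank ≤ Module.finrank K S := by
  rw [rank_eq_finrank_span_cols]
  exact Submodule.finrank_mono (Submodule.span_le.mpr (Set.range_subset_iff.mpr hS))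

noncomputable def hessianForm (d : ℕ) (A : Matrix (Fin d) (Fin d) ℂ) :
    Matrix (Fin d) (Fin d) ℂ →ₗ[ℝ] ℝ where
  toFun B := -(2 / (d : ℝ)) * ((d : ℝ) * (trace (A * B)).re + (trace A * trace B).re)
  map_add' B B' := by
    simp only [mul_add, trace_add, Complex.add_re]
    ring
  map_smul' r B := by
    simp only [trace_smul, mul_smul_comm, Complex.smul_re, smul_eq_mul, RingHom.id_apply]
    ring

theorem stmt_18_general {d M D : ℕ} (Ht : Fin M → Matrix (Fin d) (Fin d) ℂ)
    (H : Matrix (Fin M) (Fin M) ℝ)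
    (hHdef : ∀ i j, H i j = -(2 / (d : ℝ)) *
      ((d : ℝ) * (Matrix.trace (Ht i * Ht j)).re
        + (Matrix.trace (Ht i) * Matrix.trace (Ht j)).re))
    (g : Submodule ℝ (Matrix (Fin d) (Fin d) ℂ))
    (hdim : Module.finrank ℝ g = D)
    (hHg : ∀ j, Complex.I • Ht j ∈ g) :
    H.rank ≤ D := by
  let L := (LinearMap.pi fun i => hessianForm d (Ht i)) ∘ₗ
    DistribSMul.toLinearMap ℝ _ (-Complex.I)
  have hcol : ∀ j, H.col j ∈ g.map L := fun j => by
    have hrot : -Complex.I • Complex.I • Ht j = Ht j := by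
      rw [smul_smul, neg_mul, Complex.I_mul_I, neg_neg, one_smul]
    refine ⟨_, hHg j, funext fun i => ?_⟩
    simp only [L, LinearMap.comp_apply, DistribSMul.toLinearMap_apply, hrot, LinearMap.pi_apply]
    exact (hHdef i j).symm
  calc H.rank ≤ Module.finrank ℝ (g.map L) := H.rank_le_finrank_of_col_mem _ hcol
    _ ≤ D := hdim ▸ Submodule.finrank_map_le L g

/-- The Hessian of the phase-insensitive compilation loss `L₂` at a global optimum,
`H_ij = -(2/d)[d Re Tr[H̃_i H̃_j] + Re(Tr H̃_i Tr H̃_j)]`, has rank at most `D` when each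
`i H̃_j` lies in a real subspace `𝔤` of anti-Hermitian matrices of dimension `D`. -/
theorem stmt_18 {d M D : ℕ} (Ht : Fin M → Matrix (Fin d) (Fin d) ℂ)
    (hHerm : ∀ j, (Ht j).IsHermitian)
    (H : Matrix (Fin M) (Fin M) ℝ)
    (hHdef : ∀ i j, H i j = -(2 / (d : ℝ)) *
      ((d : ℝ) * (Matrix.trace (Ht i * Ht j)).re
        + (Matrix.trace (Ht i) * Matrix.trace (Ht j)).re))
    (g : Submodule ℝ (Matrix (Fin d) (Fin d) ℂ))
    (hanti : ∀ A ∈ g, Aᴴ = -A)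
    (hdim : Module.finrank ℝ g = D)
    (hHg : ∀ j, Complex.I • Ht j ∈ g) :
    H.rank ≤ D :=
  stmt_18_general Ht H hHdef g hdim hHg
end
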